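/- Let σ ∈ S_n and let τ = (v, π) ∈ B_n commute with (0, σ) ∈ B_n (so π commutes with σ and v is constant on each σ-orbit). Then φ((0,σ), τ) = ε̂^N, where N = Σ_C v(k_C)·(|C| − 1), the sum being over the orbits C of σ on Fin n, k_C denoting any element of C and v(k_C) ∈ {0,1} the common value of v on C, and |C| the cardinality of C. -/

import Mathlib

open Finset Equiv

/-- `Qf n a b = ∑_{i < j} a i * b j`. -/
def Qf (n : ℕ) (a b : Fin n → ZMod 2) : ZMod 2 :=
  ∑ p ∈ Finset.univ.filter (fun p : Fin n × Fin n => p.1 < p.2), a p.1 * b p.2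

/-- The underlying set of the group `H n`: pairs `(a, b)` with
`a : Fin n → ZMod 2` and `b : ZMod 2`. -/
@[ext] structure H (n : ℕ) where
  a : Fin n → ZMod 2
  b : ZMod 2

namespace H

variable {n : ℕ}

instance : Mul (H n) := ⟨fun x y => ⟨x.a + y.a, x.b + y.b + Qf n x.a y.a⟩⟩
instance : One (H n) := ⟨⟨0, 0⟩⟩
instance : Inv (H n) := ⟨fun x => ⟨x.a, x.b + Qf n x.a x.a⟩⟩

@[simp] lemma mul_a (x y : H n) : (x * y).a = x.a + y.a := rfl
@[simp] lemma mul_b (x y : H n) : (x * y).b = x.b + y.b + Qf n x.a y.a := rfl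
@[simp] lemma one_a : (1 : H n).a = 0 := rfl
@[simp] lemma one_b : (1 : H n).b = 0 := rfl
@[simp] lemma inv_a (x : H n) : (x⁻¹).a = x.a := rfl
@[simp] lemma inv_b (x : H n) : (x⁻¹).b = x.b + Qf n x.a x.a := rfl

lemma Qf_add_left (a a' b : Fin n → ZMod 2) :
    Qf n (a + a') b = Qf n a b + Qf n a' b := by
  simp [Qf, add_mul, Finset.sum_add_distrib]

lemma Qf_add_right (a b b' : Fin n → ZMod 2) :
    Qf n a (b + b') = Qf n a b + Qf n a b' := by
  simp [Qf, mul_add, Finset.sum_add_distrib]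

@[simp] lemma Qf_zero_left (b : Fin n → ZMod 2) : Qf n 0 b = 0 := by simp [Qf]
@[simp] lemma Qf_zero_right (a : Fin n → ZMod 2) : Qf n a 0 = 0 := by simp [Qf]

instance : Group (H n) where
  mul_assoc x y z := by
    ext i
    · simp [add_assoc]
    · simp only [mul_b, mul_a, Qf_add_left, Qf_add_right]
      ring
  one_mul x := by ext i <;> simp
  mul_one x := by ext i <;> simp
  inv_mul_cancel x := by
    ext i
    · show x.a i + x.a i = 0
      generalize x.a i = u; revert u; decide
    · show x.b + Qf n x.a x.a + x.b + Qf n x.a x.a = 0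
      generalize x.b = u; generalize Qf n x.a x.a = q
      revert u q; decide

end H

/-- The generator `x_i = (e_i, 0)` of `H n`. -/
def xgen (n : ℕ) (i : Fin n) : H n := ⟨Pi.single i 1, 0⟩

/-- The central element `ε = (0, 1)` of `H n`. -/
def eps (n : ℕ) : H n := ⟨0, 1⟩

/-- `Rf n σ a = ∑_{i < j, σ i > σ j} a i * a j`. -/
def Rf (n : ℕ) (σ : Equiv.Perm (Fin n)) (a : Fin n → ZMod 2) : ZMod 2 :=
  ∑ p ∈ Finset.univ.filter
      (fun p : Fin n × Fin n => p.1 < p.2 ∧ σ p.2 < σ p.1), a p.1 * a p.2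

/-- The action of `σ ∈ Sₙ` on `H n`:
`σ · (a, b) = (a ∘ σ⁻¹, b + ∑_{i<j, σ i > σ j} a i * a j)`. -/
def actH (n : ℕ) (σ : Equiv.Perm (Fin n)) (g : H n) : H n :=
  ⟨g.a ∘ σ.symm, g.b + Rf n σ g.a⟩

section Lemmas

open Finset Equiv

variable {n : ℕ}

private lemma two_cancel : ∀ x : ZMod 2, x + x = 0 := by decide

/-- Reindexing a pair-sum by a permutation acting diagonally. -/
private lemma sum_pair_perm (τ : Equiv.Perm (Fin n)) (c : Fin n × Fin n → Prop)
    [DecidablePred c] (f : Fin n → Fin n → ZMod 2) :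
    ∑ p ∈ Finset.univ.filter (fun p : Fin n × Fin n => c (τ p.1, τ p.2)), f (τ p.1) (τ p.2)
      = ∑ p ∈ Finset.univ.filter c, f p.1 p.2 := by
  apply Finset.sum_equiv (Equiv.prodCongr τ τ) <;> simp

/-- Reindexing a pair-sum by the swap. -/
private lemma sum_pair_swap (c : Fin n × Fin n → Prop)
    [DecidablePred c] (f : Fin n → Fin n → ZMod 2) :
    ∑ p ∈ Finset.univ.filter c, f p.1 p.2
      = ∑ p ∈ Finset.univ.filter (fun p : Fin n × Fin n => c (p.2, p.1)), f p.2 p.1 := by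
  apply Finset.sum_equiv (Equiv.prodComm (Fin n) (Fin n)) <;> simp

end Lemmas

section Lemmas2

open Finset Equiv

variable {n : ℕ}

private lemma flip_lt {x y : Fin n} (hne : x ≠ y) : ¬ x < y ↔ y < x :=
  ⟨fun h => lt_of_le_of_ne (not_lt.mp h) hne.symm, fun h h' => absurd h' (asymm h)⟩

private lemma Rf_add (σ : Equiv.Perm (Fin n)) (a b : Fin n → ZMod 2) :
    Rf n σ (a + b) = Rf n σ a + Rf n σ b
      + ∑ p ∈ Finset.univ.filter (fun p : Fin n × Fin n => p.1 < p.2 ∧ σ p.2 < σ p.1),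
          (a p.1 * b p.2 + b p.1 * a p.2) := by
  simp only [Rf, ← Finset.sum_add_distrib]
  apply Finset.sum_congr rfl
  intro p _
  simp only [Pi.add_apply]
  ring

private lemma Qf_act (σ : Equiv.Perm (Fin n)) (a b : Fin n → ZMod 2) :
    Qf n (a ∘ σ.symm) (b ∘ σ.symm)
      = Qf n a b
        + ∑ p ∈ Finset.univ.filter (fun p : Fin n × Fin n => p.1 < p.2 ∧ σ p.2 < σ p.1),
            (a p.1 * b p.2 + b p.1 * a p.2) := by
  classical
  have h1 : Qf n (a ∘ σ.symm) (b ∘ σ.symm)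
      = ∑ p ∈ Finset.univ.filter (fun p : Fin n × Fin n => σ p.1 < σ p.2),
          a p.1 * b p.2 := by
    rw [Qf]
    apply Finset.sum_equiv (Equiv.prodCongr σ.symm σ.symm) <;> simp
  have h2 : ∑ p ∈ Finset.univ.filter (fun p : Fin n × Fin n => σ p.1 < σ p.2), a p.1 * b p.2
      = ∑ p ∈ Finset.univ.filter
            (fun p : Fin n × Fin n => σ p.1 < σ p.2 ∧ p.1 < p.2), a p.1 * b p.2
        + ∑ p ∈ Finset.univ.filter
            (fun p : Fin n × Fin n => σ p.1 < σ p.2 ∧ p.2 < p.1), a p.1 * b p.2 := by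
    rw [← Finset.sum_filter_add_sum_filter_not
      (Finset.univ.filter (fun p : Fin n × Fin n => σ p.1 < σ p.2))
      (fun p : Fin n × Fin n => p.1 < p.2)]
    congr 1
    · rw [Finset.filter_filter]
    · rw [Finset.filter_filter]
      refine Finset.sum_congr (Finset.filter_congr ?_) (fun _ _ => rfl)
      intro p _
      constructor
      · rintro ⟨h1', h2'⟩
        have hne : p.1 ≠ p.2 := fun h => absurd (h ▸ h1' : σ p.1 < σ p.1) (lt_irrefl _)
        exact ⟨h1', (flip_lt hne).mp h2'⟩
      · rintro ⟨h1', h2'⟩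
        exact ⟨h1', fun h => absurd h (asymm h2')⟩
  have h3 : ∑ p ∈ Finset.univ.filter
        (fun p : Fin n × Fin n => σ p.1 < σ p.2 ∧ p.2 < p.1), a p.1 * b p.2
      = ∑ p ∈ Finset.univ.filter
            (fun p : Fin n × Fin n => p.1 < p.2 ∧ σ p.2 < σ p.1), b p.1 * a p.2 := by
    rw [sum_pair_swap (fun p : Fin n × Fin n => σ p.1 < σ p.2 ∧ p.2 < p.1)
      (fun i j => a i * b j)]
    refine Finset.sum_congr (Finset.filter_congr ?_) ?_
    · intro p _
      exact ⟨fun h => ⟨h.2, h.1⟩, fun h => ⟨h.2, h.1⟩⟩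
    · intro p _; ring
  have h4 : Qf n a b
      = ∑ p ∈ Finset.univ.filter
            (fun p : Fin n × Fin n => σ p.1 < σ p.2 ∧ p.1 < p.2), a p.1 * b p.2
        + ∑ p ∈ Finset.univ.filter
            (fun p : Fin n × Fin n => p.1 < p.2 ∧ σ p.2 < σ p.1), a p.1 * b p.2 := by
    rw [Qf, ← Finset.sum_filter_add_sum_filter_not
      (Finset.univ.filter (fun p : Fin n × Fin n => p.1 < p.2))
      (fun p : Fin n × Fin n => σ p.1 < σ p.2)]
    congr 1
    · rw [Finset.filter_filter]
      refine Finset.sum_congr (Finset.filter_congr ?_) (fun _ _ => rfl)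
      intro p _
      exact ⟨fun h => ⟨h.2, h.1⟩, fun h => ⟨h.2, h.1⟩⟩
    · rw [Finset.filter_filter]
      refine Finset.sum_congr (Finset.filter_congr ?_) (fun _ _ => rfl)
      intro p _
      constructor
      · rintro ⟨h1', h2'⟩
        have hne : σ p.1 ≠ σ p.2 := fun h =>
          absurd h1' (by rw [σ.injective h]; exact lt_irrefl _)
        exact ⟨h1', (flip_lt hne).mp h2'⟩
      · rintro ⟨h1', h2'⟩
        exact ⟨h1', fun h => absurd h (asymm h2')⟩
  have h5 : ∑ p ∈ Finset.univ.filter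
        (fun p : Fin n × Fin n => p.1 < p.2 ∧ σ p.2 < σ p.1),
          (a p.1 * b p.2 + b p.1 * a p.2)
      = ∑ p ∈ Finset.univ.filter
            (fun p : Fin n × Fin n => p.1 < p.2 ∧ σ p.2 < σ p.1), a p.1 * b p.2
        + ∑ p ∈ Finset.univ.filter
            (fun p : Fin n × Fin n => p.1 < p.2 ∧ σ p.2 < σ p.1), b p.1 * a p.2 :=
    Finset.sum_add_distrib
  rw [h1, h2, h3, h4, h5]
  have h6 := two_cancel (∑ p ∈ Finset.univ.filter
      (fun p : Fin n × Fin n => p.1 < p.2 ∧ σ p.2 < σ p.1), a p.1 * b p.2)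
  linear_combination -h6

end Lemmas2

section Lemmas3

open Finset Equiv

variable {n : ℕ}

private lemma Rf_comp (σ τ : Equiv.Perm (Fin n)) (a : Fin n → ZMod 2) :
    Rf n (σ * τ) a = Rf n τ a + Rf n σ (a ∘ τ.symm) := by
  classical
  -- rewrite `Rf (σ * τ)`
  have hA : Rf n (σ * τ) a
      = ∑ p ∈ Finset.univ.filter
          (fun p : Fin n × Fin n => p.1 < p.2 ∧ σ (τ p.2) < σ (τ p.1)), a p.1 * a p.2 := by
    rw [Rf]
    refine Finset.sum_congr (Finset.filter_congr ?_) (fun _ _ => rfl)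
    intro p _
    simp [Equiv.Perm.mul_apply]
  -- split it according to the relative order of `τ p.1`, `τ p.2`
  have hB : ∑ p ∈ Finset.univ.filter
        (fun p : Fin n × Fin n => p.1 < p.2 ∧ σ (τ p.2) < σ (τ p.1)), a p.1 * a p.2
      = ∑ p ∈ Finset.univ.filter
            (fun p : Fin n × Fin n =>
              (p.1 < p.2 ∧ σ (τ p.2) < σ (τ p.1)) ∧ τ p.1 < τ p.2), a p.1 * a p.2
        + ∑ p ∈ Finset.univ.filter
            (fun p : Fin n × Fin n =>
              (p.1 < p.2 ∧ σ (τ p.2) < σ (τ p.1)) ∧ τ p.2 < τ p.1), a p.1 * a p.2 := by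
    rw [← Finset.sum_filter_add_sum_filter_not
      (Finset.univ.filter
        (fun p : Fin n × Fin n => p.1 < p.2 ∧ σ (τ p.2) < σ (τ p.1)))
      (fun p : Fin n × Fin n => τ p.1 < τ p.2)]
    congr 1
    · rw [Finset.filter_filter]
    · rw [Finset.filter_filter]
      refine Finset.sum_congr (Finset.filter_congr ?_) (fun _ _ => rfl)
      intro p _
      constructor
      · rintro ⟨h1, h2⟩
        have hne : τ p.1 ≠ τ p.2 := fun h => absurd h1.1 (by
          have := τ.injective h; rw [this]; exact lt_irrefl _)
        exact ⟨h1, (flip_lt hne).mp h2⟩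
      · rintro ⟨h1, h2⟩
        exact ⟨h1, fun h => absurd h (asymm h2)⟩
  -- split `Rf τ a` according to the relative order of `στ p.1`, `στ p.2`
  have hC : Rf n τ a
      = ∑ p ∈ Finset.univ.filter
            (fun p : Fin n × Fin n =>
              (p.1 < p.2 ∧ τ p.2 < τ p.1) ∧ σ (τ p.1) < σ (τ p.2)), a p.1 * a p.2
        + ∑ p ∈ Finset.univ.filter
            (fun p : Fin n × Fin n =>
              (p.1 < p.2 ∧ σ (τ p.2) < σ (τ p.1)) ∧ τ p.2 < τ p.1), a p.1 * a p.2 := by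
    rw [Rf, ← Finset.sum_filter_add_sum_filter_not
      (Finset.univ.filter
        (fun p : Fin n × Fin n => p.1 < p.2 ∧ τ p.2 < τ p.1))
      (fun p : Fin n × Fin n => σ (τ p.1) < σ (τ p.2))]
    congr 1
    · rw [Finset.filter_filter]
    · rw [Finset.filter_filter]
      refine Finset.sum_congr (Finset.filter_congr ?_) (fun _ _ => rfl)
      intro p _
      constructor
      · rintro ⟨h1, h2⟩
        have hne : σ (τ p.1) ≠ σ (τ p.2) := fun h => absurd h1.2 (by
          have := σ.injective h; rw [this]; exact lt_irrefl _)
        exact ⟨⟨h1.1, (flip_lt hne).mp h2⟩, h1.2⟩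
      · rintro ⟨h1, h2⟩
        exact ⟨⟨h1.1, h2⟩, fun h => absurd h (asymm h1.2)⟩
  -- reindex `Rf σ (a ∘ τ.symm)` and split according to the order of `p.1`, `p.2`
  have hD : Rf n σ (a ∘ τ.symm)
      = ∑ p ∈ Finset.univ.filter
          (fun p : Fin n × Fin n => τ p.1 < τ p.2 ∧ σ (τ p.2) < σ (τ p.1)),
            a p.1 * a p.2 := by
    rw [Rf]
    apply Finset.sum_equiv (Equiv.prodCongr τ.symm τ.symm) <;> simp
  have hE : ∑ p ∈ Finset.univ.filter
        (fun p : Fin n × Fin n => τ p.1 < τ p.2 ∧ σ (τ p.2) < σ (τ p.1)), a p.1 * a p.2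
      = ∑ p ∈ Finset.univ.filter
            (fun p : Fin n × Fin n =>
              (p.1 < p.2 ∧ σ (τ p.2) < σ (τ p.1)) ∧ τ p.1 < τ p.2), a p.1 * a p.2
        + ∑ p ∈ Finset.univ.filter
            (fun p : Fin n × Fin n =>
              (τ p.1 < τ p.2 ∧ σ (τ p.2) < σ (τ p.1)) ∧ p.2 < p.1), a p.1 * a p.2 := by
    rw [← Finset.sum_filter_add_sum_filter_not
      (Finset.univ.filter
        (fun p : Fin n × Fin n => τ p.1 < τ p.2 ∧ σ (τ p.2) < σ (τ p.1)))
      (fun p : Fin n × Fin n => p.1 < p.2)]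
    congr 1
    · rw [Finset.filter_filter]
      refine Finset.sum_congr (Finset.filter_congr ?_) (fun _ _ => rfl)
      intro p _
      exact ⟨fun h => ⟨⟨h.2, h.1.2⟩, h.1.1⟩, fun h => ⟨⟨h.2, h.1.2⟩, h.1.1⟩⟩
    · rw [Finset.filter_filter]
      refine Finset.sum_congr (Finset.filter_congr ?_) (fun _ _ => rfl)
      intro p _
      constructor
      · rintro ⟨h1, h2⟩
        have hne : p.1 ≠ p.2 := fun h => absurd h1.1 (by rw [h]; exact lt_irrefl _)
        exact ⟨h1, (flip_lt hne).mp h2⟩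
      · rintro ⟨h1, h2⟩
        exact ⟨h1, fun h => absurd h (asymm h2)⟩
  -- swap the second piece of `hE`
  have hF : ∑ p ∈ Finset.univ.filter
        (fun p : Fin n × Fin n =>
          (τ p.1 < τ p.2 ∧ σ (τ p.2) < σ (τ p.1)) ∧ p.2 < p.1), a p.1 * a p.2
      = ∑ p ∈ Finset.univ.filter
            (fun p : Fin n × Fin n =>
              (p.1 < p.2 ∧ τ p.2 < τ p.1) ∧ σ (τ p.1) < σ (τ p.2)), a p.1 * a p.2 := by
    rw [sum_pair_swap
      (fun p : Fin n × Fin n => (τ p.1 < τ p.2 ∧ σ (τ p.2) < σ (τ p.1)) ∧ p.2 < p.1)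
      (fun i j => a i * a j)]
    refine Finset.sum_congr (Finset.filter_congr ?_) ?_
    · intro p _
      exact ⟨fun h => ⟨⟨h.2, h.1.1⟩, h.1.2⟩, fun h => ⟨⟨h.1.2, h.2⟩, h.1.1⟩⟩
    · intro p _; ring
  rw [hA, hB, hC, hD, hE, hF]
  have h6 := two_cancel (∑ p ∈ Finset.univ.filter
      (fun p : Fin n × Fin n =>
        (p.1 < p.2 ∧ τ p.2 < τ p.1) ∧ σ (τ p.1) < σ (τ p.2)), a p.1 * a p.2)
  linear_combination -h6

end Lemmas3

/-- The group `G n = H n ⋊ Sₙ` (the semidirect product for the action `actH`). -/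
@[ext] structure G (n : ℕ) where
  h : H n
  s : Equiv.Perm (Fin n)

section ActLemmas

open Finset Equiv

variable {n : ℕ}

private lemma actH_mul (σ : Equiv.Perm (Fin n)) (g h : H n) :
    actH n σ (g * h) = actH n σ g * actH n σ h := by
  refine H.ext ?_ ?_
  · funext i; rfl
  · show (g.b + h.b + Qf n g.a h.a) + Rf n σ (g.a + h.a)
       = (g.b + Rf n σ g.a) + (h.b + Rf n σ h.a) + Qf n (g.a ∘ σ.symm) (h.a ∘ σ.symm)
    rw [Rf_add, Qf_act]
    ring

private lemma actH_one_perm (g : H n) : actH n (1 : Equiv.Perm (Fin n)) g = g := by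
  refine H.ext ?_ ?_
  · funext i; rfl
  · show g.b + Rf n 1 g.a = g.b
    have h0 : Rf n (1 : Equiv.Perm (Fin n)) g.a = 0 := by
      rw [Rf, Finset.filter_false_of_mem, Finset.sum_empty]
      rintro p _ ⟨h1, h2⟩
      exact absurd h2 (asymm h1)
    rw [h0, add_zero]

private lemma actH_H_one (σ : Equiv.Perm (Fin n)) : actH n σ (1 : H n) = 1 := by
  refine H.ext ?_ ?_
  · funext i; rfl
  · show (0 : ZMod 2) + Rf n σ (0 : Fin n → ZMod 2) = 0
    simp [Rf]

private lemma actH_comp (σ τ : Equiv.Perm (Fin n)) (g : H n) :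
    actH n (σ * τ) g = actH n σ (actH n τ g) := by
  refine H.ext ?_ ?_
  · funext i; rfl
  · show g.b + Rf n (σ * τ) g.a = (g.b + Rf n τ g.a) + Rf n σ (g.a ∘ τ.symm)
    rw [Rf_comp]
    ring

end ActLemmas

namespace G

variable {n : ℕ}

instance : Mul (G n) := ⟨fun x y => ⟨x.h * actH n x.s y.h, x.s * y.s⟩⟩
instance : One (G n) := ⟨⟨1, 1⟩⟩
instance : Inv (G n) := ⟨fun x => ⟨actH n x.s⁻¹ x.h⁻¹, x.s⁻¹⟩⟩

@[simp] lemma mul_h (x y : G n) : (x * y).h = x.h * actH n x.s y.h := rfl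
@[simp] lemma mul_s (x y : G n) : (x * y).s = x.s * y.s := rfl
@[simp] lemma one_h : (1 : G n).h = 1 := rfl
@[simp] lemma one_s : (1 : G n).s = 1 := rfl

instance : Group (G n) where
  mul_assoc x y z := by
    refine G.ext ?_ ?_
    · show (x.h * actH n x.s y.h) * actH n (x.s * y.s) z.h
         = x.h * actH n x.s (y.h * actH n y.s z.h)
      rw [actH_mul, ← actH_comp]
      exact mul_assoc _ _ _
    · exact mul_assoc x.s y.s z.s
  one_mul x := by
    refine G.ext ?_ ?_
    · show (1 : H n) * actH n 1 x.h = x.h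
      rw [actH_one_perm, one_mul]
    · exact one_mul x.s
  mul_one x := by
    refine G.ext ?_ ?_
    · show x.h * actH n x.s 1 = x.h
      rw [actH_H_one, mul_one]
    · exact mul_one x.s
  inv_mul_cancel x := by
    refine G.ext ?_ ?_
    · show actH n x.s⁻¹ x.h⁻¹ * actH n x.s⁻¹ x.h = 1
      rw [← actH_mul, inv_mul_cancel, actH_H_one]
    · exact inv_mul_cancel x.s

end G

/-- The hyperoctahedral group `B n = (ZMod 2)ⁿ ⋊ Sₙ`, with
`(a₁, π₁) * (a₂, π₂) = (a₁ + a₂ ∘ π₁⁻¹, π₁ * π₂)`. -/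
@[ext] structure B (n : ℕ) where
  a : Fin n → ZMod 2
  s : Equiv.Perm (Fin n)

namespace B

variable {n : ℕ}

instance : Mul (B n) := ⟨fun x y => ⟨x.a + y.a ∘ x.s.symm, x.s * y.s⟩⟩
instance : One (B n) := ⟨⟨0, 1⟩⟩
instance : Inv (B n) := ⟨fun x => ⟨x.a ∘ x.s, x.s⁻¹⟩⟩

@[simp] lemma mul_a (x y : B n) : (x * y).a = x.a + y.a ∘ x.s.symm := rfl
@[simp] lemma mul_s (x y : B n) : (x * y).s = x.s * y.s := rfl
@[simp] lemma one_a : (1 : B n).a = 0 := rfl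
@[simp] lemma one_s : (1 : B n).s = 1 := rfl

instance : Group (B n) where
  mul_assoc x y z := by
    refine B.ext ?_ ?_
    · funext i
      show x.a i + y.a (x.s.symm i) + z.a (y.s.symm (x.s.symm i))
         = x.a i + (y.a (x.s.symm i) + z.a (y.s.symm (x.s.symm i)))
      exact add_assoc _ _ _
    · exact mul_assoc x.s y.s z.s
  one_mul x := by
    refine B.ext ?_ ?_
    · funext i
      show (0 : ZMod 2) + x.a i = x.a i
      exact zero_add _
    · exact one_mul x.s
  mul_one x := by
    refine B.ext ?_ ?_
    · funext i
      show x.a i + (0 : ZMod 2) = x.a i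
      exact add_zero _
    · exact mul_one x.s
  inv_mul_cancel x := by
    refine B.ext ?_ ?_
    · funext i
      show x.a (x.s i) + x.a ((x.s⁻¹).symm i) = 0
      have h : (x.s⁻¹).symm i = x.s i := rfl
      rw [h]
      generalize x.a (x.s i) = u; revert u; decide
    · exact inv_mul_cancel x.s

end B

/-- The projection `p : G n → B n`, `((a, b), σ) ↦ (a, σ)`. -/
def pG (n : ℕ) (g : G n) : B n := ⟨g.h.a, g.s⟩

/-- The central element `ε̂ = ((0,1), 1)` of `G n`. -/
def epsG (n : ℕ) : G n := ⟨⟨0, 1⟩, 1⟩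

/-- The orbit of `k` under the cyclic group generated by `σ`, as a `Finset`. -/
noncomputable def orb (n : ℕ) (σ : Equiv.Perm (Fin n)) (k : Fin n) : Finset (Fin n) :=
  letI := Classical.decPred fun j : Fin n => ∃ m : ℤ, (σ ^ m) k = j
  Finset.univ.filter (fun j => ∃ m : ℤ, (σ ^ m) k = j)

/-- The set of orbits of `σ` on `Fin n`. -/
noncomputable def orbs (n : ℕ) (σ : Equiv.Perm (Fin n)) : Finset (Finset (Fin n)) :=
  Finset.univ.image (orb n σ)

/-- The orbit of `k` under the group generated by the commuting permutations `σ` and `π`;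
it is the union of the `σ`-orbits belonging to the orbit (under the action of the group
generated by `π` on the set of `σ`-orbits) of the `σ`-orbit of `k`. -/
noncomputable def orb2 (n : ℕ) (σ π : Equiv.Perm (Fin n)) (k : Fin n) : Finset (Fin n) :=
  letI := Classical.decPred fun j : Fin n => ∃ a b : ℤ, (σ ^ a * π ^ b) k = j
  Finset.univ.filter (fun j => ∃ a b : ℤ, (σ ^ a * π ^ b) k = j)

/-- The set of orbits of the group generated by `σ` and `π` on `Fin n`. -/
noncomputable def orbs2 (n : ℕ) (σ π : Equiv.Perm (Fin n)) : Finset (Finset (Fin n)) :=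
  Finset.univ.image (orb2 n σ π)

/-! Write the lifts as `σ̃ = ((0, b), σ)` and `τ̃ = ((v, d), π)`. Since `v ∘ σ⁻¹ = v` and
`σπ = πσ`, a direct computation gives `σ̃τ̃ = ((0, Rf σ v), 1) · τ̃σ̃`, so the commutator is
`ε̂ ^ Rf σ v`, where `Rf σ v` is the parity of the inversions of `σ` inside the support of `v`.

The vector `v` is a sum of indicators of `σ`-orbits, and `Rf σ` is additive on `σ`-invariant
vectors: the cross term in `Rf σ (a + b)` is the defect of `Qf` under relabelling by `σ`.
On the indicator of an orbit `C`, `Rf σ` agrees with `Rf c 1` for the cycle `c` of `σ` on `C`;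
this is the parity of the number of inversions of `c`, i.e. of its sign `(-1) ^ (|C| - 1)`. -/

section Inversions

open Equiv.Perm

variable {n : ℕ}

lemma Rf_congr {σ τ : Perm (Fin n)} {a : Fin n → ZMod 2} (h : ∀ i, a i ≠ 0 → σ i = τ i) :
    Rf n σ a = Rf n τ a := by
  rw [Rf, Rf, Finset.sum_filter, Finset.sum_filter]
  refine Finset.sum_congr rfl fun p _ => ?_
  by_cases h1 : a p.1 = 0
  · simp [h1]
  by_cases h2 : a p.2 = 0
  · simp [h2]
  rw [h p.1 h1, h p.2 h2]

@[simp] lemma Rf_zero (σ : Perm (Fin n)) : Rf n σ 0 = 0 := by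
  simp [Rf]

lemma Rf_one_perm (a : Fin n → ZMod 2) : Rf n 1 a = 0 :=
  Finset.sum_eq_zero fun p hp => by
    obtain ⟨h₁, h₂⟩ := (Finset.mem_filter.mp hp).2
    exact absurd h₂ (asymm h₁)

lemma sign_eq_neg_one_pow_card_inversions (σ : Perm (Fin n)) :
    sign σ = (-1 : ℤˣ) ^ #{p : Fin n × Fin n | p.1 < p.2 ∧ σ p.2 < σ p.1} := by
  rw [sign_eq_prod_prod_Ioi, ← Finset.prod_const, Finset.prod_filter, Fintype.prod_prod_type]
  refine Finset.prod_congr rfl fun i _ => ?_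
  rw [← Finset.filter_lt_eq_Ioi, Finset.prod_filter]
  refine Finset.prod_congr rfl fun j _ => ?_
  by_cases hij : i < j
  · rcases (σ.injective.ne hij.ne).lt_or_gt with h | h <;> simp [hij, h, h.not_gt]
  · simp [hij]

lemma sign_eq_neg_one_pow_Rf (σ : Perm (Fin n)) : sign σ = (-1 : ℤˣ) ^ Rf n σ 1 := by
  simp [sign_eq_neg_one_pow_card_inversions, Rf, uzpow_natCast]

lemma Rf_one_of_isCycle {c : Perm (Fin n)} (hc : c.IsCycle) : Rf n c 1 = #c.support - 1 := by
  have neg_one_pow_injective : ∀ x y : ZMod 2, (-1 : ℤˣ) ^ x = (-1) ^ y → x = y := by decide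
  refine neg_one_pow_injective _ _ ?_
  rw [← sign_eq_neg_one_pow_Rf, hc.sign, uzpow_sub, uzpow_natCast, uzpow_one, div_neg, div_one]

lemma Rf_const_mul (σ : Perm (Fin n)) (c : ZMod 2) (a : Fin n → ZMod 2) :
    Rf n σ (fun i => c * a i) = c * Rf n σ a := by
  have hc : c * c = c := by revert c; decide
  simp only [Rf, Finset.mul_sum]
  refine Finset.sum_congr rfl fun p _ => ?_
  linear_combination a p.1 * a p.2 * hc

lemma Rf_add_of_invariant {σ : Perm (Fin n)} {a b : Fin n → ZMod 2}
    (ha : ∀ i, a (σ i) = a i) (hb : ∀ i, b (σ i) = b i) :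
    Rf n σ (a + b) = Rf n σ a + Rf n σ b := by
  have invariant : ∀ c : Fin n → ZMod 2, (∀ i, c (σ i) = c i) → c ∘ σ.symm = c :=
    fun c hc => funext fun i => by simpa using (hc (σ.symm i)).symm
  have hQ := Qf_act σ a b
  rw [invariant a ha, invariant b hb, left_eq_add] at hQ
  rw [Rf_add, hQ, add_zero]

lemma Rf_sum_of_invariant {ι : Type*} {σ : Perm (Fin n)} (s : Finset ι)
    (f : ι → Fin n → ZMod 2) (h : ∀ c ∈ s, ∀ i, f c (σ i) = f c i) :
    Rf n σ (∑ c ∈ s, f c) = ∑ c ∈ s, Rf n σ (f c) := by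
  classical
  induction s using Finset.induction_on with
  | empty => simp
  | insert c s hc ih =>
    have hs : ∀ i, (∑ d ∈ s, f d) (σ i) = (∑ d ∈ s, f d) i := fun i => by
      simp only [Finset.sum_apply]
      exact Finset.sum_congr rfl fun d hd => h d (Finset.mem_insert_of_mem hd) i
    rw [Finset.sum_insert hc, Finset.sum_insert hc,
      Rf_add_of_invariant (h c (Finset.mem_insert_self c s)) hs,
      ih fun d hd => h d (Finset.mem_insert_of_mem hd)]

end Inversions

section Orbits

open Equiv.Perm

variable {n : ℕ} {σ : Perm (Fin n)}

lemma mem_orb {k j : Fin n} : j ∈ orb n σ k ↔ σ.SameCycle k j := by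
  simp [orb, SameCycle]

lemma apply_mem_orb {k i : Fin n} : σ i ∈ orb n σ k ↔ i ∈ orb n σ k := by
  simp only [mem_orb, sameCycle_apply_right]

lemma orb_eq_of_mem {k j : Fin n} (h : j ∈ orb n σ k) : orb n σ j = orb n σ k :=
  Finset.ext fun i => by
    simp only [mem_orb] at h ⊢
    exact ⟨h.trans, h.symm.trans⟩

lemma Rf_indicator_orb (k : Fin n) :
    Rf n σ (fun i => if i ∈ orb n σ k then 1 else 0) = #(orb n σ k) - 1 := by
  set χ : Fin n → ZMod 2 := fun i => if i ∈ orb n σ k then 1 else 0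
  set c := σ.cycleOf k
  have hχ : ∀ i, χ (c i) = χ i := fun i => by
    rw [cycleOf_apply]
    split_ifs <;> simp only [χ, apply_mem_orb]
  have hχ' : ∀ i, (1 - χ) (c i) = (1 - χ) i := fun i => by
    simp only [Pi.sub_apply, Pi.one_apply, hχ]
  have on_orb : Rf n σ χ = Rf n c χ := Rf_congr fun i hi => by
    have hi : i ∈ orb n σ k := by by_contra h; simp [χ, h] at hi
    exact ((mem_orb.mp hi).cycleOf_apply).symm
  have off_orb : Rf n c (1 - χ) = 0 := by
    rw [← Rf_one_perm (1 - χ)]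
    refine Rf_congr fun i hi => cycleOf_apply_of_not_sameCycle fun h => hi ?_
    simp [χ, mem_orb.mpr h]
  have hsplit : Rf n c 1 = Rf n c χ := by
    rw [← add_sub_cancel χ 1, Rf_add_of_invariant hχ hχ', off_orb, add_zero]
  rw [on_orb, ← hsplit]
  by_cases hk : σ k = k
  · have : orb n σ k = {k} := Finset.ext fun j => by
      rw [mem_orb, Finset.mem_singleton]
      exact ⟨fun h => (h.eq_of_left hk).symm, fun h => h ▸ SameCycle.refl σ k⟩
    rw [show c = 1 from (cycleOf_eq_one_iff σ).mpr hk, Rf_one_perm, this, Finset.card_singleton]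
    simp
  · have : orb n σ k = c.support := Finset.ext fun j => by
      rw [mem_orb, mem_support_cycleOf_iff, mem_support]
      exact (and_iff_left hk).symm
    rw [Rf_one_of_isCycle (isCycle_cycleOf σ hk), this]

lemma eq_of_mem_orb {v : Fin n → ZMod 2} (hv : ∀ i, v (σ i) = v i) {k j : Fin n}
    (h : j ∈ orb n σ k) : v j = v k := by
  obtain ⟨m, rfl⟩ := (mem_orb.mp h).exists_nat_pow_eq
  clear h
  induction m with
  | zero => rfl
  | succ m ih => rw [pow_succ', mul_apply, hv, ih]

lemma eq_sum_orbs_indicator {v : Fin n → ZMod 2} (hv : ∀ i, v (σ i) = v i)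
    {rep : Finset (Fin n) → Fin n} (hrep : ∀ C ∈ orbs n σ, rep C ∈ C) :
    v = ∑ C ∈ orbs n σ, fun i => v (rep C) * if i ∈ C then 1 else 0 := by
  funext i
  have hi : orb n σ i ∈ orbs n σ := Finset.mem_image_of_mem _ (Finset.mem_univ i)
  rw [Finset.sum_apply, Finset.sum_eq_single_of_mem _ hi]
  · rw [if_pos (mem_orb.mpr (SameCycle.refl σ i)), mul_one, eq_of_mem_orb hv (hrep _ hi)]
  · intro C hC hne
    obtain ⟨k, -, rfl⟩ := Finset.mem_image.mp hC
    rw [if_neg fun h => hne (orb_eq_of_mem h).symm, mul_zero]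

lemma Rf_eq_sum_orbs {v : Fin n → ZMod 2} (hv : ∀ i, v (σ i) = v i)
    {rep : Finset (Fin n) → Fin n} (hrep : ∀ C ∈ orbs n σ, rep C ∈ C) :
    Rf n σ v = ∑ C ∈ orbs n σ, v (rep C) * (#C - 1) := by
  conv_lhs => rw [eq_sum_orbs_indicator hv hrep]
  rw [Rf_sum_of_invariant]
  · refine Finset.sum_congr rfl fun C hC => ?_
    obtain ⟨k, -, rfl⟩ := Finset.mem_image.mp hC
    rw [Rf_const_mul, Rf_indicator_orb]
  · intro C hC i
    obtain ⟨k, -, rfl⟩ := Finset.mem_image.mp hC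
    simp only [apply_mem_orb]

end Orbits

section Lifts

variable {n : ℕ}

lemma epsG_pow (m : ℕ) : epsG n ^ m = ⟨⟨0, m⟩, 1⟩ := by
  induction m with
  | zero => rfl
  | succ m ih =>
    rw [pow_succ, ih]
    ext <;> simp [epsG, actH]

open scoped commutatorElement in
lemma commutatorElement_of_lifts {σ π : Equiv.Perm (Fin n)} {v : Fin n → ZMod 2}
    (hc : Commute (⟨0, σ⟩ : B n) ⟨v, π⟩) {σt τt : G n}
    (hσt : pG n σt = ⟨0, σ⟩) (hτt : pG n τt = ⟨v, π⟩) :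
    ⁅σt, τt⁆ = ⟨⟨0, Rf n σ v⟩, 1⟩ := by
  have ha : σt.h.a = 0 := congrArg B.a hσt
  have hs : σt.s = σ := congrArg B.s hσt
  have hw : τt.h.a = v := congrArg B.a hτt
  have ht : τt.s = π := congrArg B.s hτt
  have hv : v ∘ σ.symm = v := by simpa using congrArg B.a hc
  have hσπ : σ * π = π * σ := congrArg B.s hc
  rw [commutatorElement_def, mul_assoc, ← mul_inv_rev, mul_inv_eq_iff_eq_mul]
  ext <;> simp [push_end, actH, ha, hs, hw, ht, hv, hσπ, Rf_one_perm, add_comm, add_left_comm]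

end Lifts

open scoped commutatorElement
theorem phi_formula_single_general (n : ℕ) (σ : Equiv.Perm (Fin n))
    (v : Fin n → ZMod 2) (π : Equiv.Perm (Fin n))
    (hc : Commute ((⟨0, σ⟩ : B n)) ⟨v, π⟩)
    (rep : Finset (Fin n) → Fin n) (hrep : ∀ C ∈ orbs n σ, rep C ∈ C)
    (σt τt : G n) (hσt : pG n σt = ⟨0, σ⟩) (hτt : pG n τt = ⟨v, π⟩) :
    ⁅σt, τt⁆ = epsG n ^ (∑ C ∈ orbs n σ, (v (rep C)).val * (C.card - 1)) := by
  have hv : ∀ i, v (σ i) = v i := fun i => by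
    simpa using (congrFun (congrArg B.a hc) (σ i)).symm
  rw [commutatorElement_of_lifts hc hσt hτt, epsG_pow, Rf_eq_sum_orbs hv hrep, Nat.cast_sum]
  congr 2
  refine Finset.sum_congr rfl fun C hC => ?_
  obtain ⟨k, -, rfl⟩ := Finset.mem_image.mp hC
  have hk : 1 ≤ (orb n σ k).card := Finset.card_pos.mpr ⟨k, mem_orb.mpr (.refl σ k)⟩
  rw [Nat.cast_mul, Nat.cast_sub hk, ZMod.natCast_zmod_val, Nat.cast_one]

/-- For `σ ∈ Sₙ` and `τ = (v, π) ∈ B n` commuting with `(0, σ)`,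
`φ((0,σ), τ) = ε̂^N` where `N = Σ_C v(k_C)·(|C| − 1)`, the sum running over the orbits
`C` of `σ` on `Fin n`, with `k_C` any element of `C`. -/
theorem phi_formula_single (n : ℕ) (hn : 0 < n) (σ : Equiv.Perm (Fin n))
    (v : Fin n → ZMod 2) (π : Equiv.Perm (Fin n))
    (hc : Commute ((⟨0, σ⟩ : B n)) ⟨v, π⟩)
    (rep : Finset (Fin n) → Fin n) (hrep : ∀ C ∈ orbs n σ, rep C ∈ C)
    (σt τt : G n) (hσt : pG n σt = ⟨0, σ⟩) (hτt : pG n τt = ⟨v, π⟩) :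
    ⁅σt, τt⁆ = epsG n ^ (∑ C ∈ orbs n σ, (v (rep C)).val * (C.card - 1)) :=
  phi_formula_single_general n σ v π hc rep hrep σt τt hσt hτt
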